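/- There exists a constant C > 0 with the following property. Let u = (u¹, u², u³) be a vector field whose components belong to the class below, which is divergence free (∂_x u¹ + ∂_y u² + ∂_z u³ = 0) and has vanishing x-average (∫₀¹ u(x,y,z) dx = 0 for all (y,z)). Then: (i) for every integer m ≥ 0, ( Σ_{|α|=m} Σ_{j=1}^{3} ( ‖∂^α ∂_x² u^j‖_{L²}² + ‖∂^α ∂_z ∂_x u^j‖_{L²}² ) )^{1/2} ≤ C [ ( Σ_{|α|=m} ‖∂^α (∂_x² + ∂_z²) u³‖_{L²}² )^{1/2} + ( Σ_{|α|=m} ‖∂^α Δ u²‖_{L²}² )^{1/2} ]; (ii) for every ν ∈ (0,1], ( Σ_{j=1}^{3} ‖Δ∂_x u^j‖_{L²}² )^{1/2} + ‖Δ∂_z u³‖_{L²} ≤ C ( ν^{−1/3} ‖∇(∂_x² + ∂_z²) u³‖_{L²} + ν^{1/3} ‖∇Δ u³‖_{L²} + ‖∇Δ u²‖_{L²} ), where ‖∇g‖_{L²}² = ‖∂_x g‖_{L²}² + ‖∂_y g‖_{L²}² + ‖∂_z g‖_{L²}². The constant C is independent of u, m, ν. -/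

import Mathlib

open MeasureTheory

noncomputable section

/-- Partial derivative in the first variable `x`. -/
def pdx (f : ℝ → ℝ → ℝ → ℂ) : ℝ → ℝ → ℝ → ℂ :=
  fun x y z => deriv (fun x' => f x' y z) x

/-- Partial derivative in the second variable `y`. -/
def pdy (f : ℝ → ℝ → ℝ → ℂ) : ℝ → ℝ → ℝ → ℂ :=
  fun x y z => deriv (fun y' => f x y' z) y

/-- Partial derivative in the third variable `z`. -/
def pdz (f : ℝ → ℝ → ℝ → ℂ) : ℝ → ℝ → ℝ → ℂ :=
  fun x y z => deriv (fun z' => f x y z') z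

/-- Iterated partial derivative `∂^α` for a multi-index `α ∈ ℕ³`. -/
def pderiv3 (α : ℕ × ℕ × ℕ) (f : ℝ → ℝ → ℝ → ℂ) : ℝ → ℝ → ℝ → ℂ :=
  (pdx^[α.1]) ((pdy^[α.2.1]) ((pdz^[α.2.2]) f))

/-- Squared `L²` norm on `Ω = 𝕋 × ℝ × 𝕋` (with periods `1` in `x` and `z`):
`‖f‖_{L²}² = ∫₀¹∫_ℝ∫₀¹ |f(x,y,z)|² dx dy dz`. -/
def L2sq (f : ℝ → ℝ → ℝ → ℂ) : ℝ :=
  ∫ x in Set.Ioc (0:ℝ) 1, ∫ y : ℝ, ∫ z in Set.Ioc (0:ℝ) 1, ‖f x y z‖ ^ 2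

/-- `L²` norm on `Ω = 𝕋 × ℝ × 𝕋`. -/
def L2norm (f : ℝ → ℝ → ℝ → ℂ) : ℝ :=
  Real.sqrt (L2sq f)

/-- The multi-indices `α ∈ ℕ³` of order `|α| ≤ N`. -/
def multiIndicesLe (N : ℕ) : Finset (ℕ × ℕ × ℕ) :=
  (Finset.range (N+1) ×ˢ Finset.range (N+1) ×ˢ Finset.range (N+1)).filter
    fun α => α.1 + α.2.1 + α.2.2 ≤ N

/-- Squared `H^N` norm: `‖f‖_{H^N}² = Σ_{|α| ≤ N} ‖∂^α f‖_{L²}²`. -/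
def HNsq (N : ℕ) (f : ℝ → ℝ → ℝ → ℂ) : ℝ :=
  ∑ α ∈ multiIndicesLe N, L2sq (pderiv3 α f)

/-- `H^N` norm. -/
def HN (N : ℕ) (f : ℝ → ℝ → ℝ → ℂ) : ℝ :=
  Real.sqrt (HNsq N f)

/-- `L²` norm of the gradient: `‖∇f‖_{L²}² = ‖∂_x f‖² + ‖∂_y f‖² + ‖∂_z f‖²`. -/
def gradL2norm (f : ℝ → ℝ → ℝ → ℂ) : ℝ :=
  Real.sqrt (L2sq (pdx f) + L2sq (pdy f) + L2sq (pdz f))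

/-- The Laplacian `Δ = ∂_x² + ∂_y² + ∂_z²`. -/
def lap (f : ℝ → ℝ → ℝ → ℂ) : ℝ → ℝ → ℝ → ℂ :=
  pdx (pdx f) + pdy (pdy f) + pdz (pdz f)

/-- The operator `∂_x² + ∂_z²`. -/
def dxxzz (f : ℝ → ℝ → ℝ → ℂ) : ℝ → ℝ → ℝ → ℂ :=
  pdx (pdx f) + pdz (pdz f)

/-- The class of smooth functions `f : ℝ³ → ℂ` which are `1`-periodic in `x` and in `z`
and, together with all partial derivatives, decay faster than any polynomial as
`|y| → ∞`. -/
structure GoodFn (f : ℝ → ℝ → ℝ → ℂ) : Prop where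
  smooth : ContDiff ℝ (⊤ : ℕ∞) (fun p : ℝ × ℝ × ℝ => f p.1 p.2.1 p.2.2)
  per_x : ∀ x y z, f (x + 1) y z = f x y z
  per_z : ∀ x y z, f x y (z + 1) = f x y z
  decay : ∀ (α : ℕ × ℕ × ℕ) (n : ℕ), ∃ C : ℝ, ∀ x y z : ℝ,
    ‖pderiv3 α f x y z‖ * |y| ^ n ≤ C


/-- The multi-indices `α ∈ ℕ³` of order `|α| = m`. -/
def multiIndicesEq (m : ℕ) : Finset (ℕ × ℕ × ℕ) :=
  (Finset.range (m+1) ×ˢ Finset.range (m+1) ×ˢ Finset.range (m+1)).filter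
    fun α => α.1 + α.2.1 + α.2.2 = m

/-!
On this class `∂_x, ∂_y, ∂_z` are pairwise commuting and skew-adjoint for the `L²` pairing
(integration by parts: periodicity in `x, z`, decay in `y`). Everything then follows from energy
identities: `‖(∂_x² + ∂_z²) v‖² = ‖∂_x² v‖² + 2‖∂_x∂_z v‖² + ‖∂_z² v‖²`, `‖Δv‖²` is the sum of all
`‖∂_i∂_j v‖²`, and `‖∂_y²∂_x v‖² = ⟪∂_y³ v, ∂_y∂_x² v⟫ ≤ ‖∂_y³ v‖ ‖∂_y∂_x² v‖`.
Part (i) uses `∂_x u¹ = -(∂_y u² + ∂_z u³)`. Part (ii) splits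
`Δ∂_x u³ = ∂_x(∂_x² + ∂_z²)u³ + ∂_y²∂_x u³` (likewise for `∂_z`), bounds the last term by the
interpolation inequality, and uses `√(ab) ≤ (ν^{-1/3} a + ν^{1/3} b)/2`.
-/

open Function Set MeasureTheory
open scoped ComplexConjugate InnerProductSpace

section CommutingSkewOperators

variable {G E : Type*} [AddCommGroup G] [NormedAddCommGroup E]

def IsSkewAdjointWrt (𝕜 : Type*) [RCLike 𝕜] [InnerProductSpace 𝕜 E] (T : G →+ E)
    (D : AddMonoid.End G) : Prop :=
  ∀ a b, ⟪T (D a), T b⟫_𝕜 = -⟪T a, T (D b)⟫_𝕜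

structure CommutingSkewTriple (𝕜 : Type*) [RCLike 𝕜] [InnerProductSpace 𝕜 E] (T : G →+ E)
    (Dx Dy Dz : AddMonoid.End G) : Prop where
  skew_x : IsSkewAdjointWrt 𝕜 T Dx
  skew_y : IsSkewAdjointWrt 𝕜 T Dy
  skew_z : IsSkewAdjointWrt 𝕜 T Dz
  comm_xy : Commute Dx Dy
  comm_xz : Commute Dx Dz
  comm_yz : Commute Dy Dz

def laplacian3 (Dx Dy Dz : AddMonoid.End G) : AddMonoid.End G := Dx * Dx + Dy * Dy + Dz * Dz

def laplacianXZ (Dx Dz : AddMonoid.End G) : AddMonoid.End G := Dx * Dx + Dz * Dz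

def gradNorm (T : G →+ E) (Dx Dy Dz : AddMonoid.End G) (b : G) : ℝ :=
  √(‖T (Dx b)‖ ^ 2 + ‖T (Dy b)‖ ^ 2 + ‖T (Dz b)‖ ^ 2)

lemma Commute.apply_apply {D D' : AddMonoid.End G} (h : Commute D D') (a : G) :
    D (D' a) = D' (D a) :=
  DFunLike.congr_fun h.eq a

variable {𝕜 : Type*} [RCLike 𝕜] [InnerProductSpace 𝕜 E] {T : G →+ E}
  {D D' Dx Dy Dz : AddMonoid.End G}

lemma IsSkewAdjointWrt.inner_eq_neg_inner (hD : IsSkewAdjointWrt 𝕜 T D) (a b : G) :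
    ⟪T a, T (D b)⟫_𝕜 = -⟪T (D a), T b⟫_𝕜 := by
  rw [hD, neg_neg]

lemma re_inner_apply_apply_eq_norm_sq (hD : IsSkewAdjointWrt 𝕜 T D)
    (hD' : IsSkewAdjointWrt 𝕜 T D') (h : Commute D D') (a : G) :
    RCLike.re ⟪T (D (D a)), T (D' (D' a))⟫_𝕜 = ‖T (D' (D a))‖ ^ 2 := by
  rw [hD, h.apply_apply (D' a), hD'.inner_eq_neg_inner, neg_neg, h.apply_apply a,
    inner_self_eq_norm_sq]

lemma norm_sq_le_norm_mul_norm (hD : IsSkewAdjointWrt 𝕜 T D)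
    (hD' : IsSkewAdjointWrt 𝕜 T D') (h : Commute D D') (a : G) :
    ‖T (D' (D' (D a)))‖ ^ 2 ≤ ‖T (D' (D' (D' a)))‖ * ‖T (D' (D (D a)))‖ := by
  have key : ⟪T (D' (D' (D a))), T (D' (D' (D a)))⟫_𝕜
      = ⟪T (D' (D' (D' a))), T (D' (D (D a)))⟫_𝕜 := by
    rw [show D' (D' (D a)) = D (D' (D' a)) by simp only [h.apply_apply], hD,
      show D (D (D' (D' a))) = D' (D' (D (D a))) by simp only [h.apply_apply],
      hD'.inner_eq_neg_inner, neg_neg]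
  rw [← inner_self_eq_norm_sq (𝕜 := 𝕜), key]
  exact re_inner_le_norm _ _

lemma commute_laplacian3 {P : AddMonoid.End G} (hx : Commute Dx P) (hy : Commute Dy P)
    (hz : Commute Dz P) : Commute (laplacian3 Dx Dy Dz) P :=
  ((hx.mul_left hx).add_left (hy.mul_left hy)).add_left (hz.mul_left hz)

lemma commute_laplacianXZ {P : AddMonoid.End G} (hx : Commute Dx P) (hz : Commute Dz P) :
    Commute (laplacianXZ Dx Dz) P :=
  (hx.mul_left hx).add_left (hz.mul_left hz)

lemma norm_le_gradNorm_x (b : G) : ‖T (Dx b)‖ ≤ gradNorm T Dx Dy Dz b :=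
  Real.le_sqrt_of_sq_le (by nlinarith [sq_nonneg ‖T (Dy b)‖, sq_nonneg ‖T (Dz b)‖])

lemma norm_le_gradNorm_y (b : G) : ‖T (Dy b)‖ ≤ gradNorm T Dx Dy Dz b :=
  Real.le_sqrt_of_sq_le (by nlinarith [sq_nonneg ‖T (Dx b)‖, sq_nonneg ‖T (Dz b)‖])

lemma laplacian3_symm : laplacian3 Dz Dy Dx = laplacian3 Dx Dy Dz := by
  simp only [laplacian3]; abel

lemma laplacianXZ_symm : laplacianXZ Dz Dx = laplacianXZ Dx Dz := add_comm _ _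

lemma gradNorm_symm : gradNorm T Dz Dy Dx = gradNorm T Dx Dy Dz := by
  funext b; simp only [gradNorm]; ring_nf

namespace CommutingSkewTriple

variable (h : CommutingSkewTriple 𝕜 T Dx Dy Dz)
include h

lemma symm_xz : CommutingSkewTriple 𝕜 T Dz Dy Dx :=
  ⟨h.skew_z, h.skew_y, h.skew_x, h.comm_yz.symm, h.comm_xz.symm, h.comm_xy.symm⟩

lemma norm_sq_laplacianXZ (a : G) :
    ‖T (laplacianXZ Dx Dz a)‖ ^ 2
      = ‖T (Dx (Dx a))‖ ^ 2 + 2 * ‖T (Dz (Dx a))‖ ^ 2 + ‖T (Dz (Dz a))‖ ^ 2 := by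
  change ‖T (Dx (Dx a) + Dz (Dz a))‖ ^ 2 = _
  rw [map_add, norm_add_sq (𝕜 := 𝕜), re_inner_apply_apply_eq_norm_sq h.skew_x h.skew_z h.comm_xz]

lemma norm_sq_laplacian3 (a : G) :
    ‖T (laplacian3 Dx Dy Dz a)‖ ^ 2
      = ‖T (Dx (Dx a))‖ ^ 2 + ‖T (Dy (Dy a))‖ ^ 2 + ‖T (Dz (Dz a))‖ ^ 2
        + 2 * ‖T (Dy (Dx a))‖ ^ 2 + 2 * ‖T (Dz (Dx a))‖ ^ 2 + 2 * ‖T (Dz (Dy a))‖ ^ 2 := by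
  change ‖T (Dx (Dx a) + Dy (Dy a) + Dz (Dz a))‖ ^ 2 = _
  rw [map_add, map_add, norm_add_sq (𝕜 := 𝕜), norm_add_sq (𝕜 := 𝕜), inner_add_left, map_add,
    re_inner_apply_apply_eq_norm_sq h.skew_x h.skew_y h.comm_xy,
    re_inner_apply_apply_eq_norm_sq h.skew_x h.skew_z h.comm_xz,
    re_inner_apply_apply_eq_norm_sq h.skew_y h.skew_z h.comm_yz]
  ring

lemma norm_Dy_Dy_le (a : G) : ‖T (Dy (Dy a))‖ ≤ ‖T (laplacian3 Dx Dy Dz a)‖ := by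
  refine (sq_le_sq₀ (norm_nonneg _) (norm_nonneg _)).mp ?_
  rw [h.norm_sq_laplacian3]
  nlinarith [sq_nonneg ‖T (Dx (Dx a))‖, sq_nonneg ‖T (Dz (Dz a))‖, sq_nonneg ‖T (Dy (Dx a))‖,
    sq_nonneg ‖T (Dz (Dx a))‖, sq_nonneg ‖T (Dz (Dy a))‖]

lemma norm_Dx_Dx_le (a : G) : ‖T (Dx (Dx a))‖ ≤ ‖T (laplacianXZ Dx Dz a)‖ := by
  refine (sq_le_sq₀ (norm_nonneg _) (norm_nonneg _)).mp ?_
  rw [h.norm_sq_laplacianXZ]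
  nlinarith [sq_nonneg ‖T (Dz (Dx a))‖, sq_nonneg ‖T (Dz (Dz a))‖]

theorem sum_norm_sq_le {u₁ u₂ u₃ : G} (hdiv : Dx u₁ + Dy u₂ + Dz u₃ = 0) :
    ‖T (Dx (Dx u₁))‖ ^ 2 + ‖T (Dz (Dx u₁))‖ ^ 2 + ‖T (Dx (Dx u₂))‖ ^ 2
      + ‖T (Dz (Dx u₂))‖ ^ 2 + ‖T (Dx (Dx u₃))‖ ^ 2 + ‖T (Dz (Dx u₃))‖ ^ 2
      ≤ 3 * (‖T (laplacianXZ Dx Dz u₃)‖ ^ 2 + ‖T (laplacian3 Dx Dy Dz u₂)‖ ^ 2) := by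
  have hu₁ : Dx u₁ = -(Dy u₂ + Dz u₃) := eq_neg_of_add_eq_zero_left (by rwa [← add_assoc])
  have hxx : T (Dx (Dx u₁)) = -(T (Dy (Dx u₂)) + T (Dz (Dx u₃))) := by
    rw [hu₁, map_neg, map_add, h.comm_xy.apply_apply, h.comm_xz.apply_apply, map_neg, map_add]
  have hzx : T (Dz (Dx u₁)) = -(T (Dz (Dy u₂)) + T (Dz (Dz u₃))) := by
    rw [hu₁, map_neg, map_add, map_neg, map_add]
  have hsq : ∀ v w : E, ‖v + w‖ ^ 2 ≤ 2 * ‖v‖ ^ 2 + 2 * ‖w‖ ^ 2 := fun v w => by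
    nlinarith [norm_add_le v w, norm_nonneg (v + w), sq_nonneg (‖v‖ - ‖w‖)]
  rw [hxx, hzx, norm_neg, norm_neg, h.norm_sq_laplacianXZ, h.norm_sq_laplacian3]
  nlinarith [hsq (T (Dy (Dx u₂))) (T (Dz (Dx u₃))), hsq (T (Dz (Dy u₂))) (T (Dz (Dz u₃))),
    sq_nonneg ‖T (Dy (Dy u₂))‖, sq_nonneg ‖T (Dz (Dz u₂))‖, sq_nonneg ‖T (Dx (Dx u₃))‖,
    sq_nonneg ‖T (Dz (Dz u₃))‖]

theorem sum_norm_sq_apply_le {P : AddMonoid.End G} (hPx : Commute P Dx) (hPy : Commute P Dy)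
    (hPz : Commute P Dz) {u₁ u₂ u₃ : G} (hdiv : Dx u₁ + Dy u₂ + Dz u₃ = 0) :
    ‖T (P (Dx (Dx u₁)))‖ ^ 2 + ‖T (P (Dz (Dx u₁)))‖ ^ 2 + ‖T (P (Dx (Dx u₂)))‖ ^ 2
      + ‖T (P (Dz (Dx u₂)))‖ ^ 2 + ‖T (P (Dx (Dx u₃)))‖ ^ 2 + ‖T (P (Dz (Dx u₃)))‖ ^ 2
      ≤ 3 * (‖T (P (laplacianXZ Dx Dz u₃))‖ ^ 2 + ‖T (P (laplacian3 Dx Dy Dz u₂))‖ ^ 2) := by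
  have hdiv' : Dx (P u₁) + Dy (P u₂) + Dz (P u₃) = 0 := by
    rw [← hPx.apply_apply, ← hPy.apply_apply, ← hPz.apply_apply, ← map_add, ← map_add, hdiv,
      map_zero]
  simpa only [hPx.apply_apply, hPz.apply_apply,
    (commute_laplacianXZ hPx.symm hPz.symm).symm.apply_apply,
    (commute_laplacian3 hPx.symm hPy.symm hPz.symm).symm.apply_apply] using h.sum_norm_sq_le hdiv'

lemma norm_laplacian3_Dx_le (a : G) :
    ‖T (laplacian3 Dx Dy Dz (Dx a))‖
      ≤ gradNorm T Dx Dy Dz (laplacianXZ Dx Dz a)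
        + √(gradNorm T Dx Dy Dz (laplacian3 Dx Dy Dz a)
            * gradNorm T Dx Dy Dz (laplacianXZ Dx Dz a)) := by
  have hsplit : laplacian3 Dx Dy Dz (Dx a) = Dx (laplacianXZ Dx Dz a) + Dy (Dy (Dx a)) := by
    change Dx (Dx (Dx a)) + Dy (Dy (Dx a)) + Dz (Dz (Dx a))
      = Dx (Dx (Dx a) + Dz (Dz a)) + Dy (Dy (Dx a))
    rw [map_add]
    simp only [h.comm_xz.apply_apply]
    abel
  have hyyy : ‖T (Dy (Dy (Dy a)))‖ ≤ gradNorm T Dx Dy Dz (laplacian3 Dx Dy Dz a) := by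
    refine (h.norm_Dy_Dy_le (Dy a)).trans ?_
    rw [(commute_laplacian3 h.comm_xy (Commute.refl Dy) h.comm_yz.symm).apply_apply]
    exact norm_le_gradNorm_y _
  have hyxx : ‖T (Dy (Dx (Dx a)))‖ ≤ gradNorm T Dx Dy Dz (laplacianXZ Dx Dz a) := by
    rw [← h.comm_xy.apply_apply, ← h.comm_xy.apply_apply]
    refine (h.norm_Dx_Dx_le (Dy a)).trans ?_
    rw [(commute_laplacianXZ h.comm_xy h.comm_yz.symm).apply_apply]
    exact norm_le_gradNorm_y _
  have hyyx : ‖T (Dy (Dy (Dx a)))‖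
      ≤ √(gradNorm T Dx Dy Dz (laplacian3 Dx Dy Dz a)
          * gradNorm T Dx Dy Dz (laplacianXZ Dx Dz a)) :=
    Real.le_sqrt_of_sq_le ((norm_sq_le_norm_mul_norm h.skew_x h.skew_y h.comm_xy a).trans
      (mul_le_mul hyyy hyxx (norm_nonneg _) (Real.sqrt_nonneg _)))
  rw [hsplit, map_add]
  exact (norm_add_le _ _).trans (add_le_add (norm_le_gradNorm_x _) hyyx)

lemma norm_laplacian3_Dz_le (a : G) :
    ‖T (laplacian3 Dx Dy Dz (Dz a))‖
      ≤ gradNorm T Dx Dy Dz (laplacianXZ Dx Dz a)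
        + √(gradNorm T Dx Dy Dz (laplacian3 Dx Dy Dz a)
            * gradNorm T Dx Dy Dz (laplacianXZ Dx Dz a)) := by
  have := h.symm_xz.norm_laplacian3_Dx_le a
  rwa [laplacian3_symm, laplacianXZ_symm, gradNorm_symm] at this

theorem norm_laplacian3_le {u₁ u₂ u₃ : G} (hdiv : Dx u₁ + Dy u₂ + Dz u₃ = 0) {s t : ℝ}
    (hs : 1 ≤ s) (ht : 0 ≤ t) (hst : s * t = 1) :
    √(‖T (laplacian3 Dx Dy Dz (Dx u₁))‖ ^ 2 + ‖T (laplacian3 Dx Dy Dz (Dx u₂))‖ ^ 2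
        + ‖T (laplacian3 Dx Dy Dz (Dx u₃))‖ ^ 2) + ‖T (laplacian3 Dx Dy Dz (Dz u₃))‖
      ≤ 5 * (s * gradNorm T Dx Dy Dz (laplacianXZ Dx Dz u₃)
          + t * gradNorm T Dx Dy Dz (laplacian3 Dx Dy Dz u₃)
          + gradNorm T Dx Dy Dz (laplacian3 Dx Dy Dz u₂)) := by
  have h₃x := h.norm_laplacian3_Dx_le u₃
  have h₃z := h.norm_laplacian3_Dz_le u₃
  set G₁ := gradNorm T Dx Dy Dz (laplacianXZ Dx Dz u₃)
  set G₂ := gradNorm T Dx Dy Dz (laplacian3 Dx Dy Dz u₃)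
  set G₃ := gradNorm T Dx Dy Dz (laplacian3 Dx Dy Dz u₂)
  have hG₁ : 0 ≤ G₁ := Real.sqrt_nonneg _
  have hG₂ : 0 ≤ G₂ := Real.sqrt_nonneg _
  have hG₃ : 0 ≤ G₃ := Real.sqrt_nonneg _
  have hX : √(G₂ * G₁) ≤ (s * G₁ + t * G₂) / 2 :=
    Real.sqrt_le_iff.mpr ⟨by positivity, by
      nlinarith [sq_nonneg (s * G₁ - t * G₂), congrArg (· * (G₁ * G₂)) hst]⟩
  have h₂ : ‖T (laplacian3 Dx Dy Dz (Dx u₂))‖ ≤ G₃ := by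
    rw [(commute_laplacian3 (Commute.refl Dx) h.comm_xy.symm h.comm_xz.symm).apply_apply]
    exact norm_le_gradNorm_x _
  have h₁ : ‖T (laplacian3 Dx Dy Dz (Dx u₁))‖ ≤ G₃ + (G₁ + √(G₂ * G₁)) := by
    have hu₁ : Dx u₁ = -(Dy u₂ + Dz u₃) := eq_neg_of_add_eq_zero_left (by rwa [← add_assoc])
    rw [hu₁, map_neg, map_add, map_neg, map_add, norm_neg,
      (commute_laplacian3 h.comm_xy (Commute.refl Dy) h.comm_yz.symm).apply_apply]
    exact (norm_add_le _ _).trans (add_le_add (norm_le_gradNorm_y _) h₃z)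
  have hsqrt : ∀ a b c : ℝ, 0 ≤ a → 0 ≤ b → 0 ≤ c → √(a ^ 2 + b ^ 2 + c ^ 2) ≤ a + b + c :=
    fun a b c ha hb hc => Real.sqrt_le_iff.mpr
      ⟨by positivity, by nlinarith [mul_nonneg ha hb, mul_nonneg ha hc, mul_nonneg hb hc]⟩
  have := hsqrt _ _ _ (norm_nonneg (T (laplacian3 Dx Dy Dz (Dx u₁))))
    (norm_nonneg (T (laplacian3 Dx Dy Dz (Dx u₂)))) (norm_nonneg (T (laplacian3 Dx Dy Dz (Dx u₃))))
  nlinarith [le_mul_of_one_le_left hG₁ hs, mul_nonneg ht hG₂]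

end CommutingSkewTriple

end CommutingSkewOperators

def uncurry3 (f : ℝ → ℝ → ℝ → ℂ) (p : ℝ × ℝ × ℝ) : ℂ := f p.1 p.2.1 p.2.2

def Smooth3 (f : ℝ → ℝ → ℝ → ℂ) : Prop := ContDiff ℝ (⊤ : ℕ∞) (uncurry3 f)

lemma uncurry3_injective : Injective uncurry3 :=
  fun _ _ h => funext₃ fun x y z => congrFun h (x, y, z)

section SecondDerivatives

variable {E F : Type*} [NormedAddCommGroup E] [NormedSpace ℝ E] [NormedAddCommGroup F]
  [NormedSpace ℝ F] {g : E → F}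

lemma fderiv_apply_comm (hg : ContDiff ℝ (⊤ : ℕ∞) g) (p v w : E) :
    fderiv ℝ (fun q => fderiv ℝ g q v) p w = fderiv ℝ (fun q => fderiv ℝ g q w) p v := by
  have hd : DifferentiableAt ℝ (fderiv ℝ g) p :=
    (hg.fderiv_right (m := (⊤ : ℕ∞)) (by simp)).differentiable (by simp) p
  rw [fderiv_clm_apply hd (differentiableAt_const v),
    fderiv_clm_apply hd (differentiableAt_const w)]
  have h2 : minSmoothness ℝ 2 ≤ ((⊤ : ℕ∞) : WithTop ℕ∞) := by
    rw [minSmoothness_of_isRCLikeNormedField]; exact WithTop.coe_le_coe.mpr le_top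
  simpa using (hg.contDiffAt.isSymmSndFDerivAt h2 (x := p)) w v

lemma contDiff_fderiv_apply (hg : ContDiff ℝ (⊤ : ℕ∞) g) (v : E) :
    ContDiff ℝ (⊤ : ℕ∞) fun p => fderiv ℝ g p v :=
  (hg.fderiv_right (m := (⊤ : ℕ∞)) (by simp)).clm_apply contDiff_const

end SecondDerivatives

namespace Smooth3

variable {f : ℝ → ℝ → ℝ → ℂ} (hf : Smooth3 f)
include hf

lemma hasDerivAt_x (x y z : ℝ) :
    HasDerivAt (fun t => f t y z) (fderiv ℝ (uncurry3 f) (x, y, z) (1, 0, 0)) x :=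
  (hf.differentiable (by simp) _).hasFDerivAt.comp_hasDerivAt x
    ((hasDerivAt_id x).prodMk (hasDerivAt_const x (y, z)))

lemma hasDerivAt_y (x y z : ℝ) :
    HasDerivAt (fun t => f x t z) (fderiv ℝ (uncurry3 f) (x, y, z) (0, 1, 0)) y :=
  (hf.differentiable (by simp) _).hasFDerivAt.comp_hasDerivAt y
    ((hasDerivAt_const y x).prodMk ((hasDerivAt_id y).prodMk (hasDerivAt_const y z)))

lemma hasDerivAt_z (x y z : ℝ) :
    HasDerivAt (fun t => f x y t) (fderiv ℝ (uncurry3 f) (x, y, z) (0, 0, 1)) z :=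
  (hf.differentiable (by simp) _).hasFDerivAt.comp_hasDerivAt z
    ((hasDerivAt_const z x).prodMk ((hasDerivAt_const z y).prodMk (hasDerivAt_id z)))

lemma hasDerivAt_pdx (x y z : ℝ) : HasDerivAt (fun t => f t y z) (pdx f x y z) x :=
  (hf.hasDerivAt_x x y z).differentiableAt.hasDerivAt

lemma hasDerivAt_pdy (x y z : ℝ) : HasDerivAt (fun t => f x t z) (pdy f x y z) y :=
  (hf.hasDerivAt_y x y z).differentiableAt.hasDerivAt

lemma hasDerivAt_pdz (x y z : ℝ) : HasDerivAt (fun t => f x y t) (pdz f x y z) z :=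
  (hf.hasDerivAt_z x y z).differentiableAt.hasDerivAt

lemma uncurry3_pdx : uncurry3 (pdx f) = fun p => fderiv ℝ (uncurry3 f) p (1, 0, 0) :=
  funext fun p => (hf.hasDerivAt_x p.1 p.2.1 p.2.2).deriv

lemma uncurry3_pdy : uncurry3 (pdy f) = fun p => fderiv ℝ (uncurry3 f) p (0, 1, 0) :=
  funext fun p => (hf.hasDerivAt_y p.1 p.2.1 p.2.2).deriv

lemma uncurry3_pdz : uncurry3 (pdz f) = fun p => fderiv ℝ (uncurry3 f) p (0, 0, 1) :=
  funext fun p => (hf.hasDerivAt_z p.1 p.2.1 p.2.2).deriv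

lemma dx : Smooth3 (pdx f) := by
  rw [Smooth3, hf.uncurry3_pdx]; exact contDiff_fderiv_apply hf _

lemma dy : Smooth3 (pdy f) := by
  rw [Smooth3, hf.uncurry3_pdy]; exact contDiff_fderiv_apply hf _

lemma dz : Smooth3 (pdz f) := by
  rw [Smooth3, hf.uncurry3_pdz]; exact contDiff_fderiv_apply hf _

lemma pdx_pdy_comm : pdx (pdy f) = pdy (pdx f) := uncurry3_injective <| by
  rw [hf.dy.uncurry3_pdx, hf.uncurry3_pdy, hf.dx.uncurry3_pdy, hf.uncurry3_pdx]
  exact funext fun p => fderiv_apply_comm hf p _ _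

lemma pdx_pdz_comm : pdx (pdz f) = pdz (pdx f) := uncurry3_injective <| by
  rw [hf.dz.uncurry3_pdx, hf.uncurry3_pdz, hf.dx.uncurry3_pdz, hf.uncurry3_pdx]
  exact funext fun p => fderiv_apply_comm hf p _ _

lemma pdy_pdz_comm : pdy (pdz f) = pdz (pdy f) := uncurry3_injective <| by
  rw [hf.dz.uncurry3_pdy, hf.uncurry3_pdz, hf.dy.uncurry3_pdz, hf.uncurry3_pdy]
  exact funext fun p => fderiv_apply_comm hf p _ _

end Smooth3

section Linearity

variable {f g : ℝ → ℝ → ℝ → ℂ}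

lemma pdx_add (hf : Smooth3 f) (hg : Smooth3 g) : pdx (f + g) = pdx f + pdx g :=
  funext₃ fun x y z => deriv_add (hf.hasDerivAt_x x y z).differentiableAt
    (hg.hasDerivAt_x x y z).differentiableAt

lemma pdy_add (hf : Smooth3 f) (hg : Smooth3 g) : pdy (f + g) = pdy f + pdy g :=
  funext₃ fun x y z => deriv_add (hf.hasDerivAt_y x y z).differentiableAt
    (hg.hasDerivAt_y x y z).differentiableAt

lemma pdz_add (hf : Smooth3 f) (hg : Smooth3 g) : pdz (f + g) = pdz f + pdz g :=
  funext₃ fun x y z => deriv_add (hf.hasDerivAt_z x y z).differentiableAt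
    (hg.hasDerivAt_z x y z).differentiableAt

lemma pdx_neg (f : ℝ → ℝ → ℝ → ℂ) : pdx (-f) = -pdx f := funext₃ fun _ _ _ => deriv.neg
lemma pdy_neg (f : ℝ → ℝ → ℝ → ℂ) : pdy (-f) = -pdy f := funext₃ fun _ _ _ => deriv.neg
lemma pdz_neg (f : ℝ → ℝ → ℝ → ℂ) : pdz (-f) = -pdz f := funext₃ fun _ _ _ => deriv.neg

lemma pdx_zero : pdx 0 = 0 := funext₃ fun _ _ _ => deriv_const _ _
lemma pdy_zero : pdy 0 = 0 := funext₃ fun _ _ _ => deriv_const _ _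
lemma pdz_zero : pdz 0 = 0 := funext₃ fun _ _ _ => deriv_const _ _

end Linearity

lemma Function.iterate_comm_of_mapsTo {α : Type*} {s : Set α} {P Q : α → α}
    (hP : MapsTo P s s) (h : ∀ a ∈ s, P (Q a) = Q (P a)) (n : ℕ) {a : α} (ha : a ∈ s) :
    P^[n] (Q a) = Q (P^[n] a) := by
  induction n with
  | zero => rfl
  | succ n ih => rw [iterate_succ_apply', iterate_succ_apply', ih, h _ (hP.iterate n ha)]

lemma Function.iterate_map_add_of_mapsTo {α : Type*} [Add α] {s : Set α} {P : α → α}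
    (hP : MapsTo P s s) (h : ∀ a ∈ s, ∀ b ∈ s, P (a + b) = P a + P b) (n : ℕ) {a b : α}
    (ha : a ∈ s) (hb : b ∈ s) : P^[n] (a + b) = P^[n] a + P^[n] b := by
  induction n with
  | zero => rfl
  | succ n ih =>
    rw [iterate_succ_apply', iterate_succ_apply', iterate_succ_apply', ih,
      h _ (hP.iterate n ha) _ (hP.iterate n hb)]

section Iterates

variable {f g : ℝ → ℝ → ℝ → ℂ}

lemma mapsTo_pdx : MapsTo pdx {f | Smooth3 f} {f | Smooth3 f} := fun _ hf => Smooth3.dx hf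
lemma mapsTo_pdy : MapsTo pdy {f | Smooth3 f} {f | Smooth3 f} := fun _ hf => Smooth3.dy hf
lemma mapsTo_pdz : MapsTo pdz {f | Smooth3 f} {f | Smooth3 f} := fun _ hf => Smooth3.dz hf

lemma pderiv3_add (hf : Smooth3 f) (hg : Smooth3 g) (α : ℕ × ℕ × ℕ) :
    pderiv3 α (f + g) = pderiv3 α f + pderiv3 α g := by
  simp only [pderiv3]
  rw [iterate_map_add_of_mapsTo mapsTo_pdz (fun _ ha _ hb => pdz_add ha hb) _ hf hg,
    iterate_map_add_of_mapsTo mapsTo_pdy (fun _ ha _ hb => pdy_add ha hb) _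
      (mapsTo_pdz.iterate _ hf) (mapsTo_pdz.iterate _ hg),
    iterate_map_add_of_mapsTo mapsTo_pdx (fun _ ha _ hb => pdx_add ha hb) _
      (mapsTo_pdy.iterate _ (mapsTo_pdz.iterate _ hf))
      (mapsTo_pdy.iterate _ (mapsTo_pdz.iterate _ hg))]

lemma pderiv3_neg (f : ℝ → ℝ → ℝ → ℂ) (α : ℕ × ℕ × ℕ) : pderiv3 α (-f) = -pderiv3 α f := by
  simp only [pderiv3]
  rw [← Semiconj.iterate_right (f := Neg.neg) (fun g => (pdz_neg g).symm),
    ← Semiconj.iterate_right (f := Neg.neg) (fun g => (pdy_neg g).symm),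
    ← Semiconj.iterate_right (f := Neg.neg) (fun g => (pdx_neg g).symm)]

lemma pderiv3_zero (α : ℕ × ℕ × ℕ) : pderiv3 α 0 = 0 := by
  simp only [pderiv3, iterate_fixed pdz_zero, iterate_fixed pdy_zero, iterate_fixed pdx_zero]

lemma pderiv3_pdx (hf : Smooth3 f) (α : ℕ × ℕ × ℕ) :
    pderiv3 α (pdx f) = pderiv3 (α.1 + 1, α.2.1, α.2.2) f := by
  simp only [pderiv3]
  rw [iterate_comm_of_mapsTo mapsTo_pdz (fun _ ha => (Smooth3.pdx_pdz_comm ha).symm) _ hf,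
    iterate_comm_of_mapsTo mapsTo_pdy (fun _ ha => (Smooth3.pdx_pdy_comm ha).symm) _
      (mapsTo_pdz.iterate _ hf), ← iterate_succ_apply]

lemma pderiv3_pdy (hf : Smooth3 f) (α : ℕ × ℕ × ℕ) :
    pderiv3 α (pdy f) = pderiv3 (α.1, α.2.1 + 1, α.2.2) f := by
  simp only [pderiv3]
  rw [iterate_comm_of_mapsTo mapsTo_pdz (fun _ ha => (Smooth3.pdy_pdz_comm ha).symm) _ hf,
    ← iterate_succ_apply]

lemma pderiv3_pdz (α : ℕ × ℕ × ℕ) : pderiv3 α (pdz f) = pderiv3 (α.1, α.2.1, α.2.2 + 1) f := by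
  simp only [pderiv3, ← iterate_succ_apply]

end Iterates

namespace GoodFn

variable {f g : ℝ → ℝ → ℝ → ℂ}

lemma smooth3 (hf : GoodFn f) : Smooth3 f := hf.smooth

lemma dx (hf : GoodFn f) : GoodFn (pdx f) where
  smooth := hf.smooth3.dx
  per_x x y z := by simp only [pdx, ← deriv_comp_add_const, hf.per_x]
  per_z x y z := by simp only [pdx, hf.per_z]
  decay α := by rw [pderiv3_pdx hf.smooth3]; exact hf.decay _

lemma dy (hf : GoodFn f) : GoodFn (pdy f) where
  smooth := hf.smooth3.dy
  per_x x y z := by simp only [pdy, hf.per_x]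
  per_z x y z := by simp only [pdy, hf.per_z]
  decay α := by rw [pderiv3_pdy hf.smooth3]; exact hf.decay _

lemma dz (hf : GoodFn f) : GoodFn (pdz f) where
  smooth := hf.smooth3.dz
  per_x x y z := by simp only [pdz, hf.per_x]
  per_z x y z := by simp only [pdz, ← deriv_comp_add_const, hf.per_z]
  decay α := by rw [pderiv3_pdz]; exact hf.decay _

lemma add (hf : GoodFn f) (hg : GoodFn g) : GoodFn (f + g) where
  smooth := hf.smooth.add hg.smooth
  per_x x y z := by simp only [Pi.add_apply, hf.per_x, hg.per_x]
  per_z x y z := by simp only [Pi.add_apply, hf.per_z, hg.per_z]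
  decay α n := by
    obtain ⟨C, hC⟩ := hf.decay α n
    obtain ⟨C', hC'⟩ := hg.decay α n
    refine ⟨C + C', fun x y z => ?_⟩
    rw [pderiv3_add hf.smooth3 hg.smooth3, Pi.add_apply, Pi.add_apply, Pi.add_apply]
    nlinarith [norm_add_le (pderiv3 α f x y z) (pderiv3 α g x y z), hC x y z, hC' x y z,
      pow_nonneg (abs_nonneg y) n]

lemma neg (hf : GoodFn f) : GoodFn (-f) where
  smooth := hf.smooth.neg
  per_x x y z := by simp only [Pi.neg_apply, hf.per_x]
  per_z x y z := by simp only [Pi.neg_apply, hf.per_z]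
  decay α n := by simpa only [pderiv3_neg, Pi.neg_apply, norm_neg] using hf.decay α n

lemma zero : GoodFn (0 : ℝ → ℝ → ℝ → ℂ) where
  smooth := contDiff_const
  per_x _ _ _ := rfl
  per_z _ _ _ := rfl
  decay α _ := ⟨0, fun _ _ _ => by simp [pderiv3_zero]⟩

end GoodFn

def goodFns : AddSubgroup (ℝ → ℝ → ℝ → ℂ) where
  carrier := {f | GoodFn f}
  add_mem' := GoodFn.add
  zero_mem' := GoodFn.zero
  neg_mem' := GoodFn.neg

def dxOp : AddMonoid.End goodFns :=
  AddMonoidHom.mk' (fun a => ⟨pdx a, GoodFn.dx a.2⟩)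
    fun a b => Subtype.ext (pdx_add a.2.smooth3 b.2.smooth3)

def dyOp : AddMonoid.End goodFns :=
  AddMonoidHom.mk' (fun a => ⟨pdy a, GoodFn.dy a.2⟩)
    fun a b => Subtype.ext (pdy_add a.2.smooth3 b.2.smooth3)

def dzOp : AddMonoid.End goodFns :=
  AddMonoidHom.mk' (fun a => ⟨pdz a, GoodFn.dz a.2⟩)
    fun a b => Subtype.ext (pdz_add a.2.smooth3 b.2.smooth3)

lemma commute_dxOp_dyOp : Commute dxOp dyOp :=
  AddMonoidHom.ext fun a => Subtype.ext a.2.smooth3.pdx_pdy_comm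

lemma commute_dxOp_dzOp : Commute dxOp dzOp :=
  AddMonoidHom.ext fun a => Subtype.ext a.2.smooth3.pdx_pdz_comm

lemma commute_dyOp_dzOp : Commute dyOp dzOp :=
  AddMonoidHom.ext fun a => Subtype.ext a.2.smooth3.pdy_pdz_comm

def pderivOp (α : ℕ × ℕ × ℕ) : AddMonoid.End goodFns := dxOp ^ α.1 * dyOp ^ α.2.1 * dzOp ^ α.2.2

lemma coe_pderivOp_apply (α : ℕ × ℕ × ℕ) (a : goodFns) :
    (pderivOp α a : ℝ → ℝ → ℝ → ℂ) = pderiv3 α a := by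
  simp only [pderivOp, AddMonoid.End.coe_mul, AddMonoid.End.coe_pow, comp_apply, pderiv3]
  rw [← Semiconj.iterate_right (f := Subtype.val) (ga := dzOp) (fun _ => rfl),
    ← Semiconj.iterate_right (f := Subtype.val) (ga := dyOp) (fun _ => rfl),
    ← Semiconj.iterate_right (f := Subtype.val) (ga := dxOp) (fun _ => rfl)]

lemma commute_pderivOp {D : AddMonoid.End goodFns} (α : ℕ × ℕ × ℕ) (hx : Commute dxOp D)
    (hy : Commute dyOp D) (hz : Commute dzOp D) : Commute (pderivOp α) D :=
  ((hx.pow_left _).mul_left (hy.pow_left _)).mul_left (hz.pow_left _)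

def volOmega : Measure (ℝ × ℝ × ℝ) :=
  (volume.restrict (Ioc (0 : ℝ) 1)).prod (volume.prod (volume.restrict (Ioc (0 : ℝ) 1)))

lemma integrable_volOmega_of_norm_le {E : Type*} [NormedAddCommGroup E] {F : ℝ × ℝ × ℝ → E}
    (hF : Continuous F) {C : ℝ}
    (hb : ∀ p, ‖F p‖ ≤ C * (1 + p.2.1 ^ 2)⁻¹) : Integrable F volOmega := by
  have hw : Integrable (fun p : ℝ × ℝ × ℝ => 1 * ((1 + p.2.1 ^ 2)⁻¹ * 1)) volOmega :=
    (integrable_const 1).mul_prod (integrable_inv_one_add_sq.mul_prod (integrable_const 1))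
  simp only [mul_one, one_mul] at hw
  exact (hw.const_mul C).mono' hF.aestronglyMeasurable (ae_of_all _ hb)

lemma integrable_of_norm_le_inv_one_add_sq {E : Type*} [NormedAddCommGroup E] {F : ℝ → E}
    (hF : Continuous F) {C : ℝ}
    (hb : ∀ t, ‖F t‖ ≤ C * (1 + t ^ 2)⁻¹) : Integrable F :=
  (integrable_inv_one_add_sq.const_mul C).mono' hF.aestronglyMeasurable (ae_of_all _ hb)

namespace GoodFn

variable {f g : ℝ → ℝ → ℝ → ℂ}

lemma continuous (hf : GoodFn f) : Continuous (uncurry3 f) := hf.smooth.continuous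

lemma norm_le (hf : GoodFn f) : ∃ C, 0 ≤ C ∧ ∀ x y z, ‖f x y z‖ ≤ C * (1 + y ^ 2)⁻¹ := by
  obtain ⟨C₀, h₀⟩ := hf.decay (0, 0, 0) 0
  obtain ⟨C₂, h₂⟩ := hf.decay (0, 0, 0) 2
  have hC₀ : 0 ≤ C₀ := (mul_nonneg (norm_nonneg _) (pow_nonneg (abs_nonneg _) _)).trans (h₀ 0 0 0)
  have hC₂ : 0 ≤ C₂ := (mul_nonneg (norm_nonneg _) (pow_nonneg (abs_nonneg _) _)).trans (h₂ 0 0 0)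
  refine ⟨C₀ + C₂, by positivity, fun x y z => ?_⟩
  rw [← div_eq_mul_inv, le_div_iff₀ (by positivity)]
  have := h₀ x y z
  have := h₂ x y z
  simp only [pderiv3, iterate_zero, id, pow_zero, mul_one, sq_abs] at *
  nlinarith

lemma norm_conj_mul_le (hf : GoodFn f) (hg : GoodFn g) :
    ∃ C, ∀ x y z, ‖conj (f x y z) * g x y z‖ ≤ C * (1 + y ^ 2)⁻¹ := by
  obtain ⟨C, hC, hf⟩ := hf.norm_le
  obtain ⟨C', hC', hg⟩ := hg.norm_le
  refine ⟨C * C', fun x y z => ?_⟩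
  have hw : (1 + y ^ 2)⁻¹ ≤ 1 := inv_le_one_of_one_le₀ (by nlinarith)
  rw [norm_mul, Complex.norm_conj]
  calc ‖f x y z‖ * ‖g x y z‖ ≤ C * (1 + y ^ 2)⁻¹ * (C' * 1) :=
        mul_le_mul (hf x y z) ((hg x y z).trans (by gcongr)) (norm_nonneg _) (by positivity)
    _ = C * C' * (1 + y ^ 2)⁻¹ := by ring

lemma integrable_conj_mul (hf : GoodFn f) (hg : GoodFn g) :
    Integrable (fun p => conj (uncurry3 f p) * uncurry3 g p) volOmega := by
  obtain ⟨C, hC⟩ := hf.norm_conj_mul_le hg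
  exact integrable_volOmega_of_norm_le
    ((Complex.continuous_conj.comp hf.continuous).mul hg.continuous) fun p => hC _ _ _

lemma memLp (hf : GoodFn f) : MemLp (uncurry3 f) 2 volOmega := by
  refine (memLp_two_iff_integrable_sq_norm hf.continuous.aestronglyMeasurable).mpr ?_
  simpa only [norm_mul, Complex.norm_conj, sq] using (hf.integrable_conj_mul hf).norm

end GoodFn

def toL2 : goodFns →+ Lp ℂ 2 volOmega :=
  AddMonoidHom.mk' (fun a => a.2.memLp.toLp _) fun a b => MemLp.toLp_add a.2.memLp b.2.memLp

lemma inner_toL2 (a b : goodFns) :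
    ⟪toL2 a, toL2 b⟫_ℂ = ∫ p, conj (uncurry3 a p) * uncurry3 b p ∂volOmega := by
  rw [L2.inner_def]
  refine integral_congr_ae ?_
  filter_upwards [a.2.memLp.coeFn_toLp, b.2.memLp.coeFn_toLp] with p ha hb
  rw [RCLike.inner_apply, mul_comm]
  exact congr_arg₂ (· * ·) (congrArg conj ha) hb

lemma norm_toL2_sq (a : goodFns) : ‖toL2 a‖ ^ 2 = ∫ p, ‖uncurry3 a p‖ ^ 2 ∂volOmega := by
  rw [← inner_self_eq_norm_sq (𝕜 := ℂ), inner_toL2]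
  simp only [Complex.conj_mul', ← Complex.ofReal_pow, integral_complex_ofReal, RCLike.re_to_complex,
    Complex.ofReal_re]

lemma L2sq_coe (a : goodFns) : L2sq a = ‖toL2 a‖ ^ 2 := by
  have hI := (memLp_two_iff_integrable_sq_norm a.2.continuous.aestronglyMeasurable).mp a.2.memLp
  rw [norm_toL2_sq, volOmega, integral_prod _ hI, L2sq]
  refine integral_congr_ae ?_
  filter_upwards [hI.prod_right_ae] with x hx
  exact (integral_prod _ hx).symm

section Fibres

variable {F : ℝ × ℝ × ℝ → ℂ}

lemma integral_volOmega_eq_zero_of_x (hF : Integrable F volOmega)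
    (h : ∀ y z, ∫ x in Ioc (0 : ℝ) 1, F (x, y, z) = 0) : ∫ p, F p ∂volOmega = 0 := by
  rw [volOmega, integral_prod_symm _ hF]
  exact integral_eq_zero_of_ae (ae_of_all _ fun q => h q.1 q.2)

lemma integral_volOmega_eq_zero_of_y (hF : Integrable F volOmega)
    (h : ∀ x z, ∫ y, F (x, y, z) = 0) : ∫ p, F p ∂volOmega = 0 := by
  rw [volOmega, integral_prod _ hF]
  refine integral_eq_zero_of_ae ?_
  filter_upwards [hF.prod_right_ae] with x hx
  rw [integral_prod_symm _ hx]
  exact integral_eq_zero_of_ae (ae_of_all _ fun z => h x z)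

lemma integral_volOmega_eq_zero_of_z (hF : Integrable F volOmega)
    (h : ∀ x y, ∫ z in Ioc (0 : ℝ) 1, F (x, y, z) = 0) : ∫ p, F p ∂volOmega = 0 := by
  rw [volOmega, integral_prod _ hF]
  refine integral_eq_zero_of_ae ?_
  filter_upwards [hF.prod_right_ae] with x hx
  rw [integral_prod _ hx]
  exact integral_eq_zero_of_ae (ae_of_all _ fun y => h x y)

end Fibres

lemma integral_Ioc_eq_zero_of_hasDerivAt {E : Type*} [NormedAddCommGroup E] [NormedSpace ℝ E]
    [CompleteSpace E] {h h' : ℝ → E} (hd : ∀ t, HasDerivAt h (h' t) t) (hc : Continuous h')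
    (hp : h 1 = h 0) : ∫ t in Ioc (0 : ℝ) 1, h' t = 0 := by
  rw [← intervalIntegral.integral_of_le zero_le_one,
    intervalIntegral.integral_eq_sub_of_hasDerivAt (fun t _ => hd t) (hc.intervalIntegrable 0 1),
    hp, sub_self]

lemma HasDerivAt.conj_mul {u v : ℝ → ℂ} {u' v' : ℂ} {t : ℝ} (hu : HasDerivAt u u' t)
    (hv : HasDerivAt v v' t) :
    HasDerivAt (fun s => conj (u s) * v s) (conj u' * v t + conj (u t) * v') t :=
  hu.star.mul hv

lemma inner_toL2_add_inner_toL2 (a b a' b' : goodFns) :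
    ⟪toL2 a', toL2 b⟫_ℂ + ⟪toL2 a, toL2 b'⟫_ℂ
      = ∫ p, (conj (uncurry3 a' p) * uncurry3 b p + conj (uncurry3 a p) * uncurry3 b' p)
          ∂volOmega := by
  rw [inner_toL2, inner_toL2,
    integral_add (a'.2.integrable_conj_mul b.2) (a.2.integrable_conj_mul b'.2)]

lemma continuous_conj_mul_add_conj_mul (a b a' b' : goodFns) :
    Continuous fun p => conj (uncurry3 a' p) * uncurry3 b p + conj (uncurry3 a p) * uncurry3 b' p :=
  ((Complex.continuous_conj.comp a'.2.continuous).mul b.2.continuous).add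
    ((Complex.continuous_conj.comp a.2.continuous).mul b'.2.continuous)

lemma GoodFn.integrable_conj_mul_y {f g : ℝ → ℝ → ℝ → ℂ} (hf : GoodFn f) (hg : GoodFn g)
    (x z : ℝ) : Integrable fun t => conj (f x t z) * g x t z := by
  obtain ⟨C, hC⟩ := hf.norm_conj_mul_le hg
  refine integrable_of_norm_le_inv_one_add_sq ?_ fun t => hC x t z
  exact ((Complex.continuous_conj.comp hf.continuous).mul hg.continuous).comp
    (by fun_prop : Continuous fun t : ℝ => (x, t, z))

lemma isSkewAdjointWrt_dxOp : IsSkewAdjointWrt ℂ toL2 dxOp := by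
  intro a b
  rw [← add_eq_zero_iff_eq_neg, inner_toL2_add_inner_toL2]
  refine integral_volOmega_eq_zero_of_x
    ((a.2.dx.integrable_conj_mul b.2).add (a.2.integrable_conj_mul b.2.dx)) fun y z => ?_
  refine integral_Ioc_eq_zero_of_hasDerivAt
    (fun t => (a.2.smooth3.hasDerivAt_pdx t y z).conj_mul
      (b.2.smooth3.hasDerivAt_pdx t y z))
    ((continuous_conj_mul_add_conj_mul a b (dxOp a) (dxOp b)).comp (by fun_prop)) ?_
  simpa only [zero_add, uncurry3] using
    congr_arg₂ (fun u v => conj u * v) (a.2.per_x 0 y z) (b.2.per_x 0 y z)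

lemma isSkewAdjointWrt_dzOp : IsSkewAdjointWrt ℂ toL2 dzOp := by
  intro a b
  rw [← add_eq_zero_iff_eq_neg, inner_toL2_add_inner_toL2]
  refine integral_volOmega_eq_zero_of_z
    ((a.2.dz.integrable_conj_mul b.2).add (a.2.integrable_conj_mul b.2.dz)) fun x y => ?_
  refine integral_Ioc_eq_zero_of_hasDerivAt
    (fun t => (a.2.smooth3.hasDerivAt_pdz x y t).conj_mul
      (b.2.smooth3.hasDerivAt_pdz x y t))
    ((continuous_conj_mul_add_conj_mul a b (dzOp a) (dzOp b)).comp (by fun_prop)) ?_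
  simpa only [zero_add, uncurry3] using
    congr_arg₂ (fun u v => conj u * v) (a.2.per_z x y 0) (b.2.per_z x y 0)

lemma isSkewAdjointWrt_dyOp : IsSkewAdjointWrt ℂ toL2 dyOp := by
  intro a b
  rw [← add_eq_zero_iff_eq_neg, inner_toL2_add_inner_toL2]
  refine integral_volOmega_eq_zero_of_y
    ((a.2.dy.integrable_conj_mul b.2).add (a.2.integrable_conj_mul b.2.dy)) fun x z => ?_
  exact integral_eq_zero_of_hasDerivAt_of_integrable
    (fun t => (a.2.smooth3.hasDerivAt_pdy x t z).conj_mul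
      (b.2.smooth3.hasDerivAt_pdy x t z))
    ((a.2.dy.integrable_conj_mul_y b.2 x z).add (a.2.integrable_conj_mul_y b.2.dy x z))
    (a.2.integrable_conj_mul_y b.2 x z)

lemma commutingSkewTriple_toL2 : CommutingSkewTriple ℂ toL2 dxOp dyOp dzOp :=
  ⟨isSkewAdjointWrt_dxOp, isSkewAdjointWrt_dyOp, isSkewAdjointWrt_dzOp, commute_dxOp_dyOp,
    commute_dxOp_dzOp, commute_dyOp_dzOp⟩

lemma L2sq_nonneg (f : ℝ → ℝ → ℝ → ℂ) : 0 ≤ L2sq f :=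
  integral_nonneg fun _ => integral_nonneg fun _ => integral_nonneg fun _ => by positivity

lemma L2sq_pderiv3 (α : ℕ × ℕ × ℕ) (a : goodFns) :
    L2sq (pderiv3 α a) = ‖toL2 (pderivOp α a)‖ ^ 2 := by
  rw [← coe_pderivOp_apply, L2sq_coe]

lemma L2norm_coe (a : goodFns) : L2norm a = ‖toL2 a‖ := by
  rw [L2norm, L2sq_coe, Real.sqrt_sq (norm_nonneg _)]

lemma gradL2norm_coe (a : goodFns) : gradL2norm a = gradNorm toL2 dxOp dyOp dzOp a := by
  rw [gradNorm, ← L2sq_coe, ← L2sq_coe, ← L2sq_coe]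
  rfl

lemma Real.sqrt_le_two_mul_sqrt_add_sqrt {S A B : ℝ} (hA : 0 ≤ A) (hB : 0 ≤ B)
    (h : S ≤ 3 * (A + B)) : √S ≤ 2 * (√A + √B) :=
  Real.sqrt_le_iff.mpr ⟨by positivity, by
    nlinarith [Real.sq_sqrt hA, Real.sq_sqrt hB,
      mul_nonneg (Real.sqrt_nonneg A) (Real.sqrt_nonneg B)]⟩

section VelocityEstimates

variable {u₁ u₂ u₃ : ℝ → ℝ → ℝ → ℂ} (hu₁ : GoodFn u₁) (hu₂ : GoodFn u₂) (hu₃ : GoodFn u₃)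
  (hdiv : ∀ x y z, pdx u₁ x y z + pdy u₂ x y z + pdz u₃ x y z = 0)
include hu₁ hu₂ hu₃ hdiv

lemma dxOp_add_dyOp_add_dzOp_eq_zero : dxOp ⟨u₁, hu₁⟩ + dyOp ⟨u₂, hu₂⟩ + dzOp ⟨u₃, hu₃⟩ = 0 :=
  Subtype.ext (funext₃ hdiv)

theorem velocity_estimate_i (s : Finset (ℕ × ℕ × ℕ)) :
    √(∑ α ∈ s,
        (L2sq (pderiv3 α (pdx (pdx u₁))) + L2sq (pderiv3 α (pdz (pdx u₁)))
          + L2sq (pderiv3 α (pdx (pdx u₂))) + L2sq (pderiv3 α (pdz (pdx u₂)))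
          + L2sq (pderiv3 α (pdx (pdx u₃))) + L2sq (pderiv3 α (pdz (pdx u₃)))))
      ≤ 2 * (√(∑ α ∈ s, L2sq (pderiv3 α (dxxzz u₃))) + √(∑ α ∈ s, L2sq (pderiv3 α (lap u₂)))) := by
  refine Real.sqrt_le_two_mul_sqrt_add_sqrt (Finset.sum_nonneg fun _ _ => L2sq_nonneg _)
    (Finset.sum_nonneg fun _ _ => L2sq_nonneg _) ?_
  rw [← Finset.sum_add_distrib, Finset.mul_sum]
  refine Finset.sum_le_sum fun α _ => ?_
  have := commutingSkewTriple_toL2.sum_norm_sq_apply_le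
    (commute_pderivOp α (Commute.refl _) commute_dxOp_dyOp.symm commute_dxOp_dzOp.symm)
    (commute_pderivOp α commute_dxOp_dyOp (Commute.refl _) commute_dyOp_dzOp.symm)
    (commute_pderivOp α commute_dxOp_dzOp commute_dyOp_dzOp (Commute.refl _))
    (dxOp_add_dyOp_add_dzOp_eq_zero hu₁ hu₂ hu₃ hdiv)
  simp only [← L2sq_pderiv3] at this
  -- `↑(dxOp a)` unfolds to `pdx ↑a`, so `this` is the goal up to definitional unfolding
  exact this

theorem velocity_estimate_ii {ν : ℝ} (hν : 0 < ν) (hν₁ : ν ≤ 1) :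
    √(L2sq (lap (pdx u₁)) + L2sq (lap (pdx u₂)) + L2sq (lap (pdx u₃))) + L2norm (lap (pdz u₃))
      ≤ 5 * (ν ^ (-(1:ℝ)/3) * gradL2norm (dxxzz u₃) + ν ^ ((1:ℝ)/3) * gradL2norm (lap u₃)
          + gradL2norm (lap u₂)) := by
  have hst : ν ^ (-(1:ℝ)/3) * ν ^ ((1:ℝ)/3) = 1 := by rw [← Real.rpow_add hν]; norm_num
  have := commutingSkewTriple_toL2.norm_laplacian3_le
    (dxOp_add_dyOp_add_dzOp_eq_zero hu₁ hu₂ hu₃ hdiv)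
    (Real.one_le_rpow_of_pos_of_le_one_of_nonpos hν hν₁ (by norm_num))
    (Real.rpow_nonneg hν.le _) hst
  rw [← L2norm_coe (laplacian3 dxOp dyOp dzOp (dzOp ⟨u₃, hu₃⟩))] at this
  simp only [← L2sq_coe, ← gradL2norm_coe] at this
  exact this

end VelocityEstimates

/-- Velocity estimates in terms of `(u², u³)` for a divergence-free vector field
`u = (u¹,u²,u³)` with vanishing `x`-average:
(i) `‖∇^m(∂_x,∂_z)∂_x u‖_{L²} ≤ C(‖∇^m(∂_x²+∂_z²)u³‖_{L²} + ‖∇^m Δu²‖_{L²})` for all `m`;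
(ii) `‖Δ∂_x u‖_{L²} + ‖Δ∂_z u³‖_{L²}
      ≤ C(ν^{−1/3}‖∇(∂_x²+∂_z²)u³‖_{L²} + ν^{1/3}‖∇Δu³‖_{L²} + ‖∇Δu²‖_{L²})`
for every `ν ∈ (0,1]`. -/
theorem stmt17 : ∃ C : ℝ, 0 < C ∧ ∀ u1 u2 u3 : ℝ → ℝ → ℝ → ℂ,
    GoodFn u1 → GoodFn u2 → GoodFn u3 →
    (∀ x y z, pdx u1 x y z + pdy u2 x y z + pdz u3 x y z = 0) →
    (∀ y z : ℝ, (∫ x in Set.Ioc (0:ℝ) 1, u1 x y z) = 0) →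
    (∀ y z : ℝ, (∫ x in Set.Ioc (0:ℝ) 1, u2 x y z) = 0) →
    (∀ y z : ℝ, (∫ x in Set.Ioc (0:ℝ) 1, u3 x y z) = 0) →
    (∀ m : ℕ,
      Real.sqrt (∑ α ∈ multiIndicesEq m,
          (L2sq (pderiv3 α (pdx (pdx u1))) + L2sq (pderiv3 α (pdz (pdx u1)))
           + L2sq (pderiv3 α (pdx (pdx u2))) + L2sq (pderiv3 α (pdz (pdx u2)))
           + L2sq (pderiv3 α (pdx (pdx u3))) + L2sq (pderiv3 α (pdz (pdx u3)))))
        ≤ C * (Real.sqrt (∑ α ∈ multiIndicesEq m, L2sq (pderiv3 α (dxxzz u3)))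
             + Real.sqrt (∑ α ∈ multiIndicesEq m, L2sq (pderiv3 α (lap u2))))) ∧
    (∀ ν : ℝ, 0 < ν → ν ≤ 1 →
      Real.sqrt (L2sq (lap (pdx u1)) + L2sq (lap (pdx u2)) + L2sq (lap (pdx u3)))
          + L2norm (lap (pdz u3))
        ≤ C * (ν ^ (-(1:ℝ)/3) * gradL2norm (dxxzz u3)
             + ν ^ ((1:ℝ)/3) * gradL2norm (lap u3) + gradL2norm (lap u2))) := by
  refine ⟨5, by norm_num, fun u₁ u₂ u₃ hu₁ hu₂ hu₃ hdiv _ _ _ => ⟨fun m => ?_,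
    fun ν hν hν₁ => velocity_estimate_ii hu₁ hu₂ hu₃ hdiv hν hν₁⟩⟩
  exact (velocity_estimate_i hu₁ hu₂ hu₃ hdiv _).trans (by gcongr; norm_num)

end
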